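/- arXiv:1508.00481 — 2 statements merged into one kernel-verified Lean document; each statement's English description precedes it below -/
import Mathlib

section
/- Let v ≥ 7 and let (V,ℬ) be a 4-even-free Steiner triple system of order v, and set n = v(v-1)/6 = |ℬ|. Let F be the set of pairs ({A,B},{C,D}) consisting of two disjoint unordered pairs of distinct blocks of ℬ such that the symmetric difference C △ D is contained in A ∪ B (this is exactly the condition under which the X-code of block indicator vectors fails to detect the two errors C, D in the presence of the two unknowns A, B). Then, as rational numbers, |F| / (C(n,2)·C(n-2,2)) = 1296 / ((v+2)(v+3)(v-4)(v²-v-18)). -/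
/-- A configuration is even if every point lies in an even number of its blocks. -/
def IsEvenConfig {V : Type*} [DecidableEq V] (C : Finset (Finset V)) : Prop :=
  ∀ p : V, Even (C.filter fun b => p ∈ b).card

/-!
If the two errors `C, D` were disjoint, `C △ D = C ∪ D` would be six points covered by the two
unknowns `A, A'`, forcing `A ∪ A' = C ∪ D` with `A, A'` disjoint; then `{A, A', C, D}` is an even
configuration of four blocks. So `C ∩ D = {x}`. Writing `C = {x, c₁, c₂}`, `D = {x, d₁, d₂}`, a
block other than `C, D` meets each of them in at most one point, so the unknowns covering
`{c₁, c₂, d₁, d₂}` are the blocks through `c₁d₁, c₂d₂` or those through `c₁d₂, c₂d₁`. Hence `|F|` is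
twice the number `v · C((v-1)/2, 2)` of intersecting pairs of blocks, i.e. `v(v-1)(v-3)/4`, and
with `n = v(v-1)/6` the ratio is an identity of rational functions of `v`.
-/

open Finset

variable {V : Type*} [DecidableEq V]

structure IsSteinerTripleSystem (B : Finset (Finset V)) : Prop where
  card_eq_three : ∀ b ∈ B, #b = 3
  existsUnique_subset : ∀ p : Finset V, #p = 2 → ∃! b, b ∈ B ∧ p ⊆ b

def IsEvenFree (B : Finset (Finset V)) (r : ℕ) : Prop :=
  ∀ C ⊆ B, C.Nonempty → #C ≤ r → ¬ IsEvenConfig C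

open Classical in
noncomputable def blockThrough (B : Finset (Finset V)) (x y : V) : Finset V :=
  if h : ∃ b ∈ B, x ∈ b ∧ y ∈ b then h.choose else ∅

def intersectingPairs [Fintype V] (B : Finset (Finset V)) : Finset (Finset (Finset V)) :=
  univ.biUnion fun x => {b ∈ B | x ∈ b}.powersetCard 2

def coverPairs (B Q : Finset (Finset V)) : Finset (Finset (Finset V)) :=
  {P ∈ B.powersetCard 2 | Disjoint P Q ∧ ∃ C ∈ Q, ∃ D ∈ Q, C ≠ D ∧ symmDiff C D ⊆ P.sup id}

def undetectedErrorPairs [Fintype V] (B : Finset (Finset V)) :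
    Finset (Finset (Finset V) × Finset (Finset V)) :=
  univ.filter fun PQ => PQ.1 ⊆ B ∧ PQ.2 ⊆ B ∧ #PQ.1 = 2 ∧ #PQ.2 = 2 ∧
    PQ.1 ∩ PQ.2 = ∅ ∧ ∃ C ∈ PQ.2, ∃ D ∈ PQ.2, C ≠ D ∧ symmDiff C D ⊆ PQ.1.sup id

theorem ne_of_card_eq_three {a b c : V} (h : #({a, b, c} : Finset V) = 3) :
    a ≠ b ∧ a ≠ c ∧ b ≠ c := by
  refine ⟨?_, ?_, ?_⟩ <;> rintro rfl <;> simp at h <;> grind [card_le_two]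

theorem card_filter_mem_eq_ite {P : Finset (Finset V)}
    (hP : (P : Set (Finset V)).PairwiseDisjoint id) (p : V) :
    #{b ∈ P | p ∈ b} = if p ∈ P.sup id then 1 else 0 := by
  split_ifs with hp
  · obtain ⟨b, hbP, hpb⟩ := mem_sup.mp hp
    refine le_antisymm (card_le_one.mpr fun c hc d hd => ?_)
      (card_pos.mpr ⟨b, mem_filter.mpr ⟨hbP, hpb⟩⟩)
    simp only [mem_filter] at hc hd
    exact hP.elim hc.1 hd.1 (not_disjoint_iff.mpr ⟨p, hc.2, hd.2⟩)
  · exact card_eq_zero.mpr (filter_eq_empty_iff.mpr fun b hb hpb => hp (mem_sup.mpr ⟨b, hb, hpb⟩))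

theorem isEvenConfig_union {P Q : Finset (Finset V)} (hPQ : Disjoint P Q)
    (hP : (P : Set (Finset V)).PairwiseDisjoint id)
    (hQ : (Q : Set (Finset V)).PairwiseDisjoint id) (h : P.sup id = Q.sup id) :
    IsEvenConfig (P ∪ Q) := by
  intro p
  rw [filter_union, card_union_of_disjoint (disjoint_filter_filter hPQ),
    card_filter_mem_eq_ite hP, card_filter_mem_eq_ite hQ, h]
  exact ⟨_, rfl⟩

theorem mem_coverPairs_pair {B P : Finset (Finset V)} {C D : Finset V} (hCD : C ≠ D) :
    P ∈ coverPairs B {C, D} ↔ P ⊆ B ∧ #P = 2 ∧ C ∉ P ∧ D ∉ P ∧ symmDiff C D ⊆ P.sup id := by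
  simp [coverPairs, disjoint_insert_right, hCD, hCD.symm, symmDiff_comm D C, and_assoc]

theorem mem_undetectedErrorPairs [Fintype V] {B : Finset (Finset V)}
    {PQ : Finset (Finset V) × Finset (Finset V)} :
    PQ ∈ undetectedErrorPairs B ↔ PQ.2 ⊆ B ∧ #PQ.2 = 2 ∧ PQ.1 ∈ coverPairs B PQ.2 := by
  simp only [undetectedErrorPairs, coverPairs, mem_filter, mem_univ, true_and, mem_powersetCard,
    disjoint_iff_inter_eq_empty]
  tauto

theorem filter_snd_eq_undetectedErrorPairs [Fintype V] {B Q : Finset (Finset V)} (hQB : Q ⊆ B)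
    (hQ : #Q = 2) : {PQ ∈ undetectedErrorPairs B | PQ.2 = Q} = coverPairs B Q ×ˢ {Q} := by
  ext ⟨P, Q'⟩
  simp only [mem_filter, mem_undetectedErrorPairs, mem_product, mem_singleton]
  constructor
  · rintro ⟨⟨-, -, hP⟩, rfl⟩
    exact ⟨hP, rfl⟩
  · rintro ⟨hP, rfl⟩
    exact ⟨⟨hQB, hQ, hP⟩, rfl⟩

theorem mem_intersectingPairs [Fintype V] {B Q : Finset (Finset V)} :
    Q ∈ intersectingPairs B ↔ ∃ x, Q ⊆ {b ∈ B | x ∈ b} ∧ #Q = 2 := by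
  simp [intersectingPairs]

namespace IsSteinerTripleSystem

variable {B : Finset (Finset V)} (hB : IsSteinerTripleSystem B)
include hB

theorem eq_of_mem_of_mem {b c : Finset V} (hb : b ∈ B) (hc : c ∈ B) {x y : V} (hxy : x ≠ y)
    (hxb : x ∈ b) (hyb : y ∈ b) (hxc : x ∈ c) (hyc : y ∈ c) : b = c :=
  (hB.existsUnique_subset {x, y} (card_pair hxy)).unique
    ⟨hb, insert_subset hxb (singleton_subset_iff.mpr hyb)⟩
    ⟨hc, insert_subset hxc (singleton_subset_iff.mpr hyc)⟩

theorem blockThrough_spec {x y : V} (hxy : x ≠ y) :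
    blockThrough B x y ∈ B ∧ x ∈ blockThrough B x y ∧ y ∈ blockThrough B x y := by
  obtain ⟨b, ⟨hb, hxyb⟩, -⟩ := hB.existsUnique_subset {x, y} (card_pair hxy)
  have h : ∃ b ∈ B, x ∈ b ∧ y ∈ b := ⟨b, hb, hxyb (by simp), hxyb (by simp)⟩
  rw [blockThrough, dif_pos h]
  exact h.choose_spec

theorem eq_blockThrough {b : Finset V} (hb : b ∈ B) {x y : V} (hxy : x ≠ y) (hx : x ∈ b)
    (hy : y ∈ b) : b = blockThrough B x y :=
  have h := hB.blockThrough_spec hxy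
  hB.eq_of_mem_of_mem hb h.1 hxy hx hy h.2.1 h.2.2

theorem three_mul_card [Fintype V] : 3 * #B = (Fintype.card V).choose 2 := by
  have hpairs : (univ : Finset V).powersetCard 2 = B.biUnion (powersetCard 2) := by
    ext p
    simp only [mem_powersetCard, mem_biUnion, subset_univ, true_and]
    refine ⟨fun hp => ?_, fun ⟨b, _, _, hp⟩ => hp⟩
    obtain ⟨b, ⟨hb, hpb⟩, -⟩ := hB.existsUnique_subset p hp
    exact ⟨b, hb, hpb, hp⟩
  have hdisj : (B : Set (Finset V)).PairwiseDisjoint (powersetCard 2) := by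
    intro b hb c hc hbc
    refine disjoint_left.mpr fun p hpb hpc => hbc ?_
    rw [mem_powersetCard] at hpb hpc
    exact (hB.existsUnique_subset p hpb.2).unique ⟨hb, hpb.1⟩ ⟨hc, hpc.1⟩
  have hcard : ∀ b ∈ B, #(b.powersetCard 2) = 3 := fun b hb => by
    rw [card_powersetCard, hB.card_eq_three b hb]
    rfl
  rw [← card_univ, ← card_powersetCard, hpairs, card_biUnion hdisj, sum_congr rfl hcard,
    sum_const, smul_eq_mul, mul_comm]

theorem two_mul_card_filter_mem_add_one [Fintype V] (x : V) :
    2 * #{b ∈ B | x ∈ b} + 1 = Fintype.card V := by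
  have hcover : univ.erase x = {b ∈ B | x ∈ b}.biUnion (·.erase x) := by
    ext y
    simp only [mem_erase, mem_univ, and_true, mem_biUnion, mem_filter]
    refine ⟨fun hy => ?_, fun ⟨_, _, hy, _⟩ => hy⟩
    obtain ⟨hb, hxb, hyb⟩ := hB.blockThrough_spec (Ne.symm hy)
    exact ⟨_, ⟨hb, hxb⟩, hy, hyb⟩
  have hdisj :
      (({b ∈ B | x ∈ b} : Finset (Finset V)) : Set (Finset V)).PairwiseDisjoint (·.erase x) := by
    intro b hb c hc hbc
    simp only [mem_coe, mem_filter] at hb hc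
    refine disjoint_left.mpr fun y hyb hyc => hbc ?_
    rw [mem_erase] at hyb hyc
    exact hB.eq_of_mem_of_mem hb.1 hc.1 hyb.1.symm hb.2 hyb.2 hc.2 hyc.2
  have hcard : ∀ b ∈ {b ∈ B | x ∈ b}, #(b.erase x) = 2 := fun b hb => by
    rw [mem_filter] at hb
    rw [card_erase_of_mem hb.2, hB.card_eq_three b hb.1]
  rw [← card_univ, ← card_erase_add_one (mem_univ x), hcover, card_biUnion hdisj,
    sum_congr rfl hcard, sum_const, smul_eq_mul, mul_comm]

theorem card_intersectingPairs [Fintype V] :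
    #(intersectingPairs B) = ∑ x, (#{b ∈ B | x ∈ b}).choose 2 := by
  refine (card_biUnion fun x _ y _ hxy => disjoint_left.mpr fun Q hQx hQy => ?_).trans
    (sum_congr rfl fun x _ => card_powersetCard 2 _)
  rw [mem_powersetCard] at hQx hQy
  obtain ⟨C, D, hCD, rfl⟩ := card_eq_two.mp hQx.2
  simp only [insert_subset_iff, singleton_subset_iff, mem_filter] at hQx hQy
  exact hCD (hB.eq_of_mem_of_mem hQx.1.1.1 hQx.1.2.1 hxy hQx.1.1.2 hQy.1.1.2 hQx.1.2.2 hQy.1.2.2)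

theorem eight_mul_card_intersectingPairs [Fintype V] :
    8 * (#(intersectingPairs B) : ℚ) =
      Fintype.card V * (Fintype.card V - 1) * (Fintype.card V - 3) := by
  have hpoint : ∀ x : V, ((#{b ∈ B | x ∈ b}).choose 2 : ℚ) =
      (Fintype.card V - 1) * (Fintype.card V - 3) / 8 := fun x => by
    rw [Nat.cast_choose_two, ← hB.two_mul_card_filter_mem_add_one x]
    push_cast
    ring
  rw [hB.card_intersectingPairs, Nat.cast_sum, sum_congr rfl fun x _ => hpoint x, sum_const,
    card_univ, nsmul_eq_mul]
  ring

theorem notMem_of_mem_of_ne {C D : Finset V} (hC : C ∈ B) (hD : D ∈ B) (hCD : C ≠ D) {x y : V}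
    (hxC : x ∈ C) (hxD : x ∈ D) (hyC : y ∈ C) (hyx : y ≠ x) : y ∉ D := fun hyD =>
  hCD (hB.eq_of_mem_of_mem hC hD hyx hyC hxC hyD hxD)

theorem notMem_of_ne_triple {x c₁ c₂ d₁ d₂ : V} (hC : {x, c₁, c₂} ∈ B)
    (hD : {x, d₁, d₂} ∈ B) (hCD : ({x, c₁, c₂} : Finset V) ≠ {x, d₁, d₂}) :
    c₁ ∉ ({x, d₁, d₂} : Finset V) ∧ c₂ ∉ ({x, d₁, d₂} : Finset V) :=
  have hx := ne_of_card_eq_three (hB.card_eq_three _ hC)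
  ⟨hB.notMem_of_mem_of_ne hC hD hCD (by simp) (by simp) (by simp) hx.1.symm,
    hB.notMem_of_mem_of_ne hC hD hCD (by simp) (by simp) (by simp) hx.2.1.symm⟩

theorem symmDiff_triple_eq {x c₁ c₂ d₁ d₂ : V} (hC : {x, c₁, c₂} ∈ B) (hD : {x, d₁, d₂} ∈ B)
    (hCD : ({x, c₁, c₂} : Finset V) ≠ {x, d₁, d₂}) :
    symmDiff ({x, c₁, c₂} : Finset V) {x, d₁, d₂} = {c₁, c₂, d₁, d₂} := by
  obtain ⟨hc₁, hc₂⟩ := hB.notMem_of_ne_triple hC hD hCD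
  obtain ⟨hd₁, hd₂⟩ := hB.notMem_of_ne_triple hD hC hCD.symm
  simp only [mem_insert, mem_singleton, not_or] at hc₁ hc₂ hd₁ hd₂
  ext y
  simp only [mem_symmDiff, mem_insert, mem_singleton]
  grind

theorem not_disjoint_of_mem_coverPairs (h4 : IsEvenFree B 4) {C D : Finset V} (hC : C ∈ B)
    (hD : D ∈ B) (hCD : C ≠ D) {P : Finset (Finset V)} (hP : P ∈ coverPairs B {C, D}) :
    ¬ Disjoint C D := by
  intro hdisj
  obtain ⟨hPB, hP2, hCP, hDP, hcov⟩ := (mem_coverPairs_pair hCD).mp hP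
  obtain ⟨A, A', hAA', rfl⟩ := card_eq_two.mp hP2
  rw [insert_subset_iff, singleton_subset_iff] at hPB
  rw [sup_insert, sup_singleton, id, id, sup_eq_union, hdisj.symmDiff_eq_sup] at hcov
  have hCD6 : #(C ∪ D) = 6 := by
    rw [card_union_of_disjoint hdisj, hB.card_eq_three C hC, hB.card_eq_three D hD]
  have hAA'6 : #(A ∪ A') ≤ 6 :=
    (card_union_le A A').trans (by rw [hB.card_eq_three A hPB.1, hB.card_eq_three A' hPB.2])
  have heq : C ∪ D = A ∪ A' := eq_of_subset_of_card_le hcov (hCD6 ▸ hAA'6)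
  have hAdisj : Disjoint A A' := by
    rw [← card_union_eq_card_add_card, ← heq, hCD6, hB.card_eq_three A hPB.1,
      hB.card_eq_three A' hPB.2]
  refine h4 ({A, A'} ∪ {C, D}) (by simp [insert_subset_iff, *]) (by simp)
    ((card_union_le _ _).trans (by simp [*]))
    (isEvenConfig_union (by simp [disjoint_insert_right, hCP, hDP]) ?_ ?_ (by simp [heq]))
  · rw [coe_pair]; exact Set.pairwise_pair.mpr fun _ => ⟨hAdisj, hAdisj.symm⟩
  · rw [coe_pair]; exact Set.pairwise_pair.mpr fun _ => ⟨hdisj, hdisj.symm⟩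

theorem pair_mem_coverPairs {x c₁ c₂ d₁ d₂ : V} (hC : {x, c₁, c₂} ∈ B)
    (hD : {x, d₁, d₂} ∈ B) (hCD : ({x, c₁, c₂} : Finset V) ≠ {x, d₁, d₂}) {A A' : Finset V}
    (hA : A ∈ B) (hA' : A' ∈ B) (hc₁A : c₁ ∈ A) (hc₂A' : c₂ ∈ A') (hd₁A : d₁ ∈ A)
    (hd₂A' : d₂ ∈ A') : {A, A'} ∈ coverPairs B {{x, c₁, c₂}, {x, d₁, d₂}} := by
  obtain ⟨hc₁, hc₂⟩ := hB.notMem_of_ne_triple hC hD hCD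
  obtain ⟨hd₁, hd₂⟩ := hB.notMem_of_ne_triple hD hC hCD.symm
  have hAA' : A ≠ A' := fun h => hd₁ <|
    hB.eq_of_mem_of_mem hA hC (ne_of_card_eq_three (hB.card_eq_three _ hC)).2.2 hc₁A
      (h ▸ hc₂A') (by simp) (by simp) ▸ hd₁A
  rw [mem_coverPairs_pair hCD, hB.symmDiff_triple_eq hC hD hCD]
  refine ⟨by simp [insert_subset_iff, hA, hA'], card_pair hAA', ?_, ?_, ?_⟩
  · simp only [mem_insert, mem_singleton, not_or]
    exact ⟨fun h => hd₁ (h ▸ hd₁A), fun h => hd₂ (h ▸ hd₂A')⟩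
  · simp only [mem_insert, mem_singleton, not_or]
    exact ⟨fun h => hc₁ (h ▸ hc₁A), fun h => hc₂ (h ▸ hc₂A')⟩
  · simp [insert_subset_iff, hc₁A, hc₂A', hd₁A, hd₂A']

theorem eq_or_eq_of_mem_coverPairs {x c₁ c₂ d₁ d₂ : V} (hC : {x, c₁, c₂} ∈ B)
    (hD : {x, d₁, d₂} ∈ B) (hCD : ({x, c₁, c₂} : Finset V) ≠ {x, d₁, d₂})
    {P : Finset (Finset V)} (hP : P ∈ coverPairs B {{x, c₁, c₂}, {x, d₁, d₂}}) :
    P = {blockThrough B c₁ d₁, blockThrough B c₂ d₂} ∨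
      P = {blockThrough B c₁ d₂, blockThrough B c₂ d₁} := by
  obtain ⟨hc₁, hc₂⟩ := hB.notMem_of_ne_triple hC hD hCD
  simp only [mem_insert, mem_singleton, not_or] at hc₁ hc₂
  have hCc {A : Finset V} (hA : A ∈ B) (h₁ : c₁ ∈ A) (h₂ : c₂ ∈ A) : A = {x, c₁, c₂} :=
    hB.eq_of_mem_of_mem hA hC (ne_of_card_eq_three (hB.card_eq_three _ hC)).2.2 h₁ h₂
      (by simp) (by simp)
  have hDd {A : Finset V} (hA : A ∈ B) (h₁ : d₁ ∈ A) (h₂ : d₂ ∈ A) : A = {x, d₁, d₂} :=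
    hB.eq_of_mem_of_mem hA hD (ne_of_card_eq_three (hB.card_eq_three _ hD)).2.2 h₁ h₂
      (by simp) (by simp)
  rw [mem_coverPairs_pair hCD, hB.symmDiff_triple_eq hC hD hCD] at hP
  obtain ⟨hPB, hP2, hCP, hDP, hcov⟩ := hP
  obtain ⟨A, A', -, rfl⟩ := card_eq_two.mp hP2
  clear hP2
  simp only [insert_subset_iff, singleton_subset_iff, mem_insert, mem_singleton, not_or,
    sup_insert, sup_singleton, id, sup_eq_union, mem_union] at hPB hCP hDP hcov
  wlog hc₁A : c₁ ∈ A generalizing A A'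
  · rw [pair_comm A A']
    exact this A' A hPB.symm hCP.symm hDP.symm (by tauto) (hcov.1.resolve_left hc₁A)
  have hc₂A' : c₂ ∈ A' := hcov.2.1.resolve_left fun h => hCP.1 (hCc hPB.1 hc₁A h).symm
  by_cases hd₁A : d₁ ∈ A
  · have hd₂A' : d₂ ∈ A' := hcov.2.2.2.resolve_left fun h => hDP.1 (hDd hPB.1 hd₁A h).symm
    left
    rw [← hB.eq_blockThrough hPB.1 hc₁.2.1 hc₁A hd₁A,
      ← hB.eq_blockThrough hPB.2 hc₂.2.2 hc₂A' hd₂A']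
  · have hd₁A' : d₁ ∈ A' := hcov.2.2.1.resolve_left hd₁A
    have hd₂A : d₂ ∈ A := hcov.2.2.2.resolve_right fun h => hDP.2 (hDd hPB.2 hd₁A' h).symm
    right
    rw [← hB.eq_blockThrough hPB.1 hc₁.2.2 hc₁A hd₂A,
      ← hB.eq_blockThrough hPB.2 hc₂.2.1 hc₂A' hd₁A']

theorem coverPairs_eq {x c₁ c₂ d₁ d₂ : V} (hC : {x, c₁, c₂} ∈ B) (hD : {x, d₁, d₂} ∈ B)
    (hCD : ({x, c₁, c₂} : Finset V) ≠ {x, d₁, d₂}) :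
    coverPairs B {{x, c₁, c₂}, {x, d₁, d₂}} =
      {{blockThrough B c₁ d₁, blockThrough B c₂ d₂},
        {blockThrough B c₁ d₂, blockThrough B c₂ d₁}} := by
  obtain ⟨hc₁, hc₂⟩ := hB.notMem_of_ne_triple hC hD hCD
  have h₁₁ := hB.blockThrough_spec (x := c₁) (y := d₁) fun h => hc₁ (by simp [h])
  have h₁₂ := hB.blockThrough_spec (x := c₁) (y := d₂) fun h => hc₁ (by simp [h])
  have h₂₁ := hB.blockThrough_spec (x := c₂) (y := d₁) fun h => hc₂ (by simp [h])
  have h₂₂ := hB.blockThrough_spec (x := c₂) (y := d₂) fun h => hc₂ (by simp [h])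
  ext P
  refine ⟨fun hP => by simpa using hB.eq_or_eq_of_mem_coverPairs hC hD hCD hP, ?_⟩
  rw [mem_insert, mem_singleton]
  rintro (rfl | rfl)
  · exact hB.pair_mem_coverPairs hC hD hCD h₁₁.1 h₂₂.1 h₁₁.2.1 h₂₂.2.1 h₁₁.2.2 h₂₂.2.2
  · have hD' : {x, d₂, d₁} ∈ B := pair_comm d₁ d₂ ▸ hD
    simpa only [pair_comm d₂ d₁] using hB.pair_mem_coverPairs hC hD' (pair_comm d₁ d₂ ▸ hCD)
      h₁₂.1 h₂₁.1 h₁₂.2.1 h₂₁.2.1 h₁₂.2.2 h₂₁.2.2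

theorem blockThrough_pair_ne {x c₁ c₂ d₁ d₂ : V} (hC : {x, c₁, c₂} ∈ B) (hD : {x, d₁, d₂} ∈ B)
    (hCD : ({x, c₁, c₂} : Finset V) ≠ {x, d₁, d₂}) :
    ({blockThrough B c₁ d₁, blockThrough B c₂ d₂} : Finset (Finset V)) ≠
      {blockThrough B c₁ d₂, blockThrough B c₂ d₁} := by
  obtain ⟨hc₁, hc₂⟩ := hB.notMem_of_ne_triple hC hD hCD
  obtain ⟨hd₁, -⟩ := hB.notMem_of_ne_triple hD hC hCD.symm
  have h₁₁ := hB.blockThrough_spec (x := c₁) (y := d₁) fun h => hc₁ (by simp [h])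
  have h₁₂ := hB.blockThrough_spec (x := c₁) (y := d₂) fun h => hc₁ (by simp [h])
  have h₂₁ := hB.blockThrough_spec (x := c₂) (y := d₁) fun h => hc₂ (by simp [h])
  intro h
  rcases mem_insert.mp (h ▸ mem_insert_self _ _) with h' | h'
  · exact hc₁ <| hB.eq_of_mem_of_mem h₁₁.1 hD (ne_of_card_eq_three (hB.card_eq_three _ hD)).2.2
      h₁₁.2.2 (h' ▸ h₁₂.2.2) (by simp) (by simp) ▸ h₁₁.2.1
  · exact hd₁ <| hB.eq_of_mem_of_mem h₁₁.1 hC (ne_of_card_eq_three (hB.card_eq_three _ hC)).2.2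
      h₁₁.2.1 (mem_singleton.mp h' ▸ h₂₁.2.1) (by simp) (by simp) ▸ h₁₁.2.2

theorem card_coverPairs {C D : Finset V} (hC : C ∈ B) (hD : D ∈ B) (hCD : C ≠ D) {x : V}
    (hxC : x ∈ C) (hxD : x ∈ D) : #(coverPairs B {C, D}) = 2 := by
  obtain ⟨c₁, c₂, -, hCx⟩ := card_eq_two.mp <|
    (card_erase_of_mem hxC).trans (by rw [hB.card_eq_three C hC])
  obtain ⟨d₁, d₂, -, hDx⟩ := card_eq_two.mp <|
    (card_erase_of_mem hxD).trans (by rw [hB.card_eq_three D hD])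
  rw [← insert_erase hxC, hCx] at hC hCD ⊢
  rw [← insert_erase hxD, hDx] at hD hCD ⊢
  rw [hB.coverPairs_eq hC hD hCD, card_pair (hB.blockThrough_pair_ne hC hD hCD)]

theorem mem_intersectingPairs_of_mem_coverPairs [Fintype V] (h4 : IsEvenFree B 4)
    {P Q : Finset (Finset V)} (hQB : Q ⊆ B) (hQ : #Q = 2) (hP : P ∈ coverPairs B Q) :
    Q ∈ intersectingPairs B := by
  obtain ⟨C, D, hCD, rfl⟩ := card_eq_two.mp hQ
  rw [insert_subset_iff, singleton_subset_iff] at hQB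
  obtain ⟨x, hxC, hxD⟩ :=
    not_disjoint_iff.mp (hB.not_disjoint_of_mem_coverPairs h4 hQB.1 hQB.2 hCD hP)
  exact mem_intersectingPairs.mpr ⟨x, by simp [insert_subset_iff, *], hQ⟩

theorem four_mul_card_undetectedErrorPairs [Fintype V] (h4 : IsEvenFree B 4) :
    4 * (#(undetectedErrorPairs B) : ℚ) =
      Fintype.card V * (Fintype.card V - 1) * (Fintype.card V - 3) := by
  have hmaps : ∀ PQ ∈ undetectedErrorPairs B, PQ.2 ∈ intersectingPairs B :=
    fun PQ hPQ => by
      obtain ⟨hQB, hQ, hP⟩ := mem_undetectedErrorPairs.mp hPQ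
      exact hB.mem_intersectingPairs_of_mem_coverPairs h4 hQB hQ hP
  have hfibre : ∀ Q ∈ intersectingPairs B, #{PQ ∈ undetectedErrorPairs B | PQ.2 = Q} = 2 := by
    intro Q hQ
    obtain ⟨x, hQx, hQ⟩ := mem_intersectingPairs.mp hQ
    rw [filter_snd_eq_undetectedErrorPairs (hQx.trans (filter_subset _ _)) hQ, card_product,
      card_singleton, mul_one]
    obtain ⟨C, D, hCD, rfl⟩ := card_eq_two.mp hQ
    simp only [insert_subset_iff, singleton_subset_iff, mem_filter] at hQx
    exact hB.card_coverPairs hQx.1.1 hQx.2.1 hCD hQx.1.2 hQx.2.2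
  rw [card_eq_sum_card_fiberwise hmaps, sum_congr rfl hfibre, sum_const, smul_eq_mul]
  push_cast
  linear_combination hB.eight_mul_card_intersectingPairs

end IsSteinerTripleSystem

theorem div_choose_two_mul_choose_two_eq {v n F : ℕ} (hv : 7 ≤ v) (hn : 3 * n = v.choose 2)
    (hF : 4 * (F : ℚ) = v * (v - 1) * (v - 3)) :
    (F : ℚ) / ((n.choose 2 : ℚ) * ((n - 2).choose 2 : ℚ)) =
      1296 / (((v : ℚ) + 2) * ((v : ℚ) + 3) * ((v : ℚ) - 4) * ((v : ℚ) ^ 2 - (v : ℚ) - 18)) := by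
  have hv' : (7 : ℚ) ≤ v := by exact_mod_cast hv
  have hnq : (n : ℚ) = v * (v - 1) / 6 := by
    have := congrArg (Nat.cast : ℕ → ℚ) hn
    push_cast [Nat.cast_choose_two] at this
    linarith
  have hn2 : 2 ≤ n := by
    have : (2 : ℚ) ≤ n := by rw [hnq]; nlinarith
    exact_mod_cast this
  have hden : (n.choose 2 : ℚ) * ((n - 2).choose 2 : ℚ) =
      F * (((v : ℚ) + 2) * (v + 3) * (v - 4) * (v ^ 2 - v - 18) / 1296) := by
    rw [Nat.cast_choose_two, Nat.cast_choose_two, Nat.cast_sub hn2, hnq,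
      show (F : ℚ) = v * (v - 1) * (v - 3) / 4 by linarith]
    ring
  have hF0 : (F : ℚ) ≠ 0 := by
    have : (0 : ℚ) < v * (v - 1) * (v - 3) := by
      apply mul_pos (mul_pos _ _) _ <;> linarith
    linarith
  have hR : ((v : ℚ) + 2) * (v + 3) * (v - 4) * (v ^ 2 - v - 18) ≠ 0 := by
    apply ne_of_gt (mul_pos (mul_pos (mul_pos _ _) _) _) <;> nlinarith
  rw [hden]
  field_simp

theorem sts_two_errors_two_xs_general (v : ℕ) (hv : 7 ≤ v) (B : Finset (Finset (Fin v)))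
    (hblock : ∀ b ∈ B, b.card = 3)
    (hsts : ∀ p : Finset (Fin v), p.card = 2 → ∃! b, b ∈ B ∧ p ⊆ b)
    (h4 : ∀ C ⊆ B, C.Nonempty → C.card ≤ 4 → ¬ IsEvenConfig C)
    (n : ℕ) (hBn : B.card = n) :
    ((Finset.univ.filter
        (fun PQ : Finset (Finset (Fin v)) × Finset (Finset (Fin v)) =>
          PQ.1 ⊆ B ∧ PQ.2 ⊆ B ∧ PQ.1.card = 2 ∧ PQ.2.card = 2 ∧ PQ.1 ∩ PQ.2 = ∅ ∧
            ∃ C ∈ PQ.2, ∃ D ∈ PQ.2, C ≠ D ∧ symmDiff C D ⊆ PQ.1.sup id)).card : ℚ) /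
        ((n.choose 2 : ℚ) * ((n - 2).choose 2 : ℚ)) =
      1296 / (((v : ℚ) + 2) * ((v : ℚ) + 3) * ((v : ℚ) - 4) *
        ((v : ℚ) ^ 2 - (v : ℚ) - 18)) := by
  have hB : IsSteinerTripleSystem B := ⟨hblock, hsts⟩
  have hn := hB.three_mul_card
  have hF := hB.four_mul_card_undetectedErrorPairs h4
  rw [Fintype.card_fin] at hn hF
  exact div_choose_two_mul_choose_two_eq hv (hBn ▸ hn) hF

/-- Theorem (two Xs and two errors): in a 4-even-free `STS(v)` with `v ≥ 7` and
`n = v(v-1)/6` blocks, the number `|F|` of pairs of two disjoint unordered pairs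
`({A,B},{C,D})` of distinct blocks with `C △ D ⊆ A ∪ B` satisfies
`|F| / (C(n,2)·C(n-2,2)) = 1296 / ((v+2)(v+3)(v-4)(v²-v-18))`. -/
theorem sts_two_errors_two_xs (v : ℕ) (hv : 7 ≤ v) (B : Finset (Finset (Fin v)))
    (hblock : ∀ b ∈ B, b.card = 3)
    (hsts : ∀ p : Finset (Fin v), p.card = 2 → ∃! b, b ∈ B ∧ p ⊆ b)
    (h4 : ∀ C ⊆ B, C.Nonempty → C.card ≤ 4 → ¬ IsEvenConfig C)
    (n : ℕ) (hn : n = v * (v - 1) / 6) (hBn : B.card = n) :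
    ((Finset.univ.filter
        (fun PQ : Finset (Finset (Fin v)) × Finset (Finset (Fin v)) =>
          PQ.1 ⊆ B ∧ PQ.2 ⊆ B ∧ PQ.1.card = 2 ∧ PQ.2.card = 2 ∧ PQ.1 ∩ PQ.2 = ∅ ∧
            ∃ C ∈ PQ.2, ∃ D ∈ PQ.2, C ≠ D ∧ symmDiff C D ⊆ PQ.1.sup id)).card : ℚ) /
        ((n.choose 2 : ℚ) * ((n - 2).choose 2 : ℚ)) =
      1296 / (((v : ℚ) + 2) * ((v : ℚ) + 3) * ((v : ℚ) - 4) *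
        ((v : ℚ) ^ 2 - (v : ℚ) - 18)) :=
  sts_two_errors_two_xs_general v hv B hblock hsts h4 n hBn
end

section
/- Let d ≥ 1, x ≥ 0 be integers and set w = max{d,x}+1. Let n ≥ w and u ≥ w. If there exist an (m,n,d,x) X-code and a perfect hash family PHF(N; u, n, w), then there exists an (mN, u, d, x) X-code. -/
/-!
Concatenate the X-code with the hash family: the codeword of `a` is the word whose block
indexed by a hash `f` is the inner codeword of `f a`. To separate `S₁` from `S₂`, choose a
hash `f` that is injective on `S₂` together with as much of `S₁` as fits into `w` elements.
Since `|S₁| ≤ x < w`, some `a ∈ S₂` has `f a ∉ f(S₁)`. The members of `S₂` that collide with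
`f(S₁)` vanish on every coordinate where the inner code separates `f(S₁)` from the rest of
`f(S₂)`, so such a coordinate, read in the block of `f`, separates `S₁` from `S₂`.
-/

/-- An `(·,·,d,x)` X-code on coordinate set `ι`. -/
def IsXCode {ι : Type*} [Fintype ι] (d x : ℕ) (X : Finset (ι → ZMod 2)) : Prop :=
  ∀ S₁ S₂ : Finset (ι → ZMod 2), S₁ ⊆ X → S₂ ⊆ X → Disjoint S₁ S₂ →
    S₁.card ≤ x → 1 ≤ S₂.card → S₂.card ≤ d →
    ∃ j : ι, (∑ s ∈ S₂, s j) = 1 ∧ ∀ s ∈ S₁, s j = 0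

/-- A perfect hash family `PHF(N; u, n, w)`: a family of `N` functions from a
`u`-element set to an `n`-element set such that every `w`-element subset of the domain
is mapped injectively by at least one function of the family. -/
def IsPHF (N u n w : ℕ) (F : Fin N → Fin u → Fin n) : Prop :=
  ∀ C : Finset (Fin u), C.card = w → ∃ i : Fin N, Set.InjOn (F i) ↑C

open Finset Function

variable {α β ι κ : Type*} {d x : ℕ}

theorem IsPHF.exists_injOn {N u n w : ℕ} {F : Fin N → Fin u → Fin n} (hF : IsPHF N u n w F)
    (hu : w ≤ u) {D : Finset (Fin u)} (hD : D.card ≤ w) : ∃ i, Set.InjOn (F i) D := by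
  obtain ⟨C, hDC, -, hC⟩ := exists_subsuperset_card_eq (subset_univ D) hD (by simpa using hu)
  obtain ⟨i, hi⟩ := hF C hC
  exact ⟨i, hi.mono (coe_subset.2 hDC)⟩

def IsXCodeFamily (d x : ℕ) (z : α → ι → ZMod 2) : Prop :=
  ∀ A₁ A₂ : Finset α, Disjoint A₁ A₂ → A₁.card ≤ x → 1 ≤ A₂.card → A₂.card ≤ d →
    ∃ j : ι, ∑ a ∈ A₂, z a j = 1 ∧ ∀ a ∈ A₁, z a j = 0

theorem isXCode_image_iff [Fintype α] [Fintype ι] {z : α → ι → ZMod 2} (hz : Injective z) :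
    IsXCode d x (univ.image z) ↔ IsXCodeFamily d x z := by
  constructor
  · intro h A₁ A₂ hdisj h₁ h₂ h₂'
    obtain ⟨j, hj₁, hj₀⟩ := h (A₁.image z) (A₂.image z) (image_subset_image (subset_univ _))
      (image_subset_image (subset_univ _)) ((disjoint_image hz).2 hdisj)
      (by rwa [card_image_of_injective _ hz]) (by rwa [card_image_of_injective _ hz])
      (by rwa [card_image_of_injective _ hz])
    exact ⟨j, by rwa [sum_image hz.injOn] at hj₁, fun a ha => hj₀ _ (mem_image_of_mem z ha)⟩
  · intro h S₁ S₂ hS₁ hS₂ hdisj h₁ h₂ h₂'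
    obtain ⟨A₁, -, rfl⟩ := subset_image_iff.1 hS₁
    obtain ⟨A₂, -, rfl⟩ := subset_image_iff.1 hS₂
    rw [card_image_of_injective _ hz] at h₁ h₂ h₂'
    obtain ⟨j, hj₁, hj₀⟩ := h A₁ A₂ ((disjoint_image hz).1 hdisj) h₁ h₂ h₂'
    exact ⟨j, by rwa [sum_image hz.injOn], by simpa using hj₀⟩

theorem IsXCodeFamily.comp_equiv {ι' : Type*} {z : α → ι → ZMod 2}
    (hz : IsXCodeFamily d x z) (e : ι' ≃ ι) : IsXCodeFamily d x (fun a => z a ∘ e) := by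
  intro A₁ A₂ hdisj h₁ h₂ h₂'
  obtain ⟨j, hj⟩ := hz A₁ A₂ hdisj h₁ h₂ h₂'
  exact ⟨e.symm j, by simpa using hj⟩

theorem exists_mem_apply_notMem_image [DecidableEq α] [DecidableEq β]
    (f : α → β) {A₁ A₁' A₂ : Finset α} (hsub : A₁' ⊆ A₁) (hdisj : Disjoint A₁ A₂)
    (hf : Set.InjOn f ↑(A₂ ∪ A₁')) (hcard : A₁.card < A₂.card + A₁'.card) :
    ∃ a ∈ A₂, f a ∉ A₁.image f := by
  by_contra! h
  have hle := card_le_card (s := (A₂ ∪ A₁').image f) (t := A₁.image f) <| by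
    rw [image_union]
    exact union_subset (fun b hb => by obtain ⟨a, ha, rfl⟩ := mem_image.1 hb; exact h a ha)
      (image_subset_image hsub)
  rw [card_image_of_injOn hf, card_union_of_disjoint (disjoint_of_subset_right hsub hdisj.symm)]
    at hle
  have := card_image_le (s := A₁) (f := f)
  omega

def concatCode (c : β → ι → ZMod 2) (F : κ → α → β) (a : α) (p : ι × κ) : ZMod 2 :=
  c (F p.2 a) p.1

theorem concatCode_injective {c : β → ι → ZMod 2} (hc : Injective c)
    {F : κ → α → β} (hF : ∀ a a', a ≠ a' → ∃ i, F i a ≠ F i a') :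
    Injective (concatCode c F) := by
  intro a a' h
  by_contra hne
  obtain ⟨i, hi⟩ := hF a a' hne
  obtain ⟨k, hk⟩ := ne_iff.1 (hc.ne hi)
  exact hk (congrFun h (k, i))

theorem IsXCodeFamily.concatCode [DecidableEq α] [DecidableEq β]
    {w : ℕ} {c : β → ι → ZMod 2} (hc : IsXCodeFamily d x c) {F : κ → α → β}
    (hF : ∀ D : Finset α, D.card ≤ w → ∃ i, Set.InjOn (F i) D) (hdw : d ≤ w) (hxw : x < w) :
    IsXCodeFamily d x (concatCode c F) := by
  intro A₁ A₂ hdisj h₁ h₂ h₂'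
  obtain ⟨A₁', hA₁', hcard⟩ := exists_subset_card_eq (min_le_left A₁.card (w - A₂.card))
  obtain ⟨i, hi⟩ := hF (A₂ ∪ A₁') (by grw [card_union_le]; omega)
  obtain ⟨a₂, ha₂, hfresh⟩ := exists_mem_apply_notMem_image (F i) hA₁' hdisj hi (by omega)
  have hiA₂ : Set.InjOn (F i) ↑({a ∈ A₂ | F i a ∉ A₁.image (F i)} : Finset α) :=
    hi.mono (by simp only [coe_filter, coe_union]; exact fun a ha => Or.inl ha.1)
  obtain ⟨k, hk₁, hk₀⟩ := hc (A₁.image (F i)) ({a ∈ A₂ | F i a ∉ A₁.image (F i)}.image (F i))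
    (disjoint_right.2 fun b hb => by
      obtain ⟨a, ha, rfl⟩ := mem_image.1 hb
      exact (mem_filter.1 ha).2)
    (card_image_le.trans h₁)
    (card_pos.2 ⟨F i a₂, mem_image_of_mem _ (mem_filter.2 ⟨ha₂, hfresh⟩)⟩)
    (card_image_le.trans ((card_filter_le _ _).trans h₂'))
  refine ⟨(k, i), ?_, fun a ha => hk₀ _ (mem_image_of_mem _ ha)⟩
  calc ∑ a ∈ A₂, c (F i a) k
      = ∑ a ∈ A₂ with F i a ∉ A₁.image (F i), c (F i a) k
        + ∑ a ∈ A₂ with F i a ∈ A₁.image (F i), c (F i a) k :=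
        (sum_filter_not_add_sum_filter _ _ _).symm
    _ = 1 := by
        rw [sum_eq_zero fun a ha => hk₀ _ (mem_filter.1 ha).2, add_zero, ← hk₁, sum_image hiA₂]

theorem xcode_phf_construction_general (m N u n d x w : ℕ) (hd : 1 ≤ d)
    (hw : w = max d x + 1) (hu : w ≤ u)
    (hX : ∃ X : Finset (Fin m → ZMod 2), X.card = n ∧ IsXCode d x X)
    (hF : ∃ F : Fin N → Fin u → Fin n, IsPHF N u n w F) :
    ∃ Z : Finset (Fin (m * N) → ZMod 2), Z.card = u ∧ IsXCode d x Z := by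
  obtain ⟨X, hXcard, hXcode⟩ := hX
  obtain ⟨F, hPHF⟩ := hF
  let e : X ≃ Fin n := X.equivFinOfCardEq hXcard
  let G : Fin N → Fin u → X := fun i a => e.symm (F i a)
  have hG (D : Finset (Fin u)) (hD : D.card ≤ w) : ∃ i, Set.InjOn (G i) D :=
    (hPHF.exists_injOn hu hD).imp fun _ hi => e.symm.injective.comp_injOn hi
  have hsep (a a' : Fin u) (hne : a ≠ a') : ∃ i, G i a ≠ G i a' := by
    obtain ⟨i, hi⟩ := hG {a, a'} (by grw [card_le_two]; omega)
    exact ⟨i, fun h => hne (hi (by simp) (by simp) h)⟩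
  let z : Fin u → Fin (m * N) → ZMod 2 := fun a => concatCode Subtype.val G a ∘ finProdFinEquiv.symm
  have hz : Injective z := finProdFinEquiv.symm.surjective.injective_comp_right.comp
    (concatCode_injective Subtype.val_injective hsep)
  have hcode : IsXCodeFamily d x (Subtype.val : X → Fin m → ZMod 2) :=
    (isXCode_image_iff Subtype.val_injective).1 (by simpa using hXcode)
  refine ⟨univ.image z, by rw [card_image_of_injective _ hz, card_univ, Fintype.card_fin], ?_⟩
  exact (isXCode_image_iff hz).2 ((hcode.concatCode hG (by omega) (by omega)).comp_equiv _)

/-- If an `(m,n,d,x)` X-code and a `PHF(N; u, n, max{d,x}+1)` exist (with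
`n, u ≥ max{d,x}+1` and `d ≥ 1`), then an `(mN, u, d, x)` X-code exists. -/
theorem xcode_phf_construction (m N u n d x w : ℕ) (hd : 1 ≤ d)
    (hw : w = max d x + 1) (hn : w ≤ n) (hu : w ≤ u)
    (hX : ∃ X : Finset (Fin m → ZMod 2), X.card = n ∧ IsXCode d x X)
    (hF : ∃ F : Fin N → Fin u → Fin n, IsPHF N u n w F) :
    ∃ Z : Finset (Fin (m * N) → ZMod 2), Z.card = u ∧ IsXCode d x Z :=
  xcode_phf_construction_general m N u n d x w hd hw hu hX hF
end
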